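/- arXiv:1706.06429 — 2 statements merged into one kernel-verified Lean document; each statement's English description precedes it below -/
import Mathlib

section
/- Let f : ℤ → ℝ be even, nonnegative, summable, and discretely convex on the positive integers, i.e. f(z+1) − 2f(z) + f(z−1) ≥ 0 for all z ≥ 1. Then its Fourier transform is nonnegative: ∑_{z∈ℤ} f(z) cos(zθ) ≥ 0 for all θ ∈ ℝ. -/
/-!
Write `c` for the cosine coefficients (`c 0 = 1`, `c k = 2 cos kθ`), `D = cumsum c` for the
Dirichlet kernel and `F = cumsum D` for the Fejér kernel, so that
`F m = |∑_{k ≤ m} e^{ikθ}|² ≥ 0`.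
Summing by parts twice,
`∑_{k ≤ N+1} a_k c_k = ∑_{m < N} Δ²a_m F_m - Δa_N F_N + a_{N+1} D_{N+1}`.
Convexity together with `a → 0` forces `Δa ≤ 0 ≤ Δ²a`, so the partial sum is at least
`a_{N+1} D_{N+1} ≥ -2 (N + 2) a_{N+1}`, which tends to `0` since `a` is decreasing and summable.
-/

open Finset Filter Topology fwdDiff

def cumsum {R : Type*} [AddCommMonoid R] (c : ℕ → R) (n : ℕ) : R :=
  ∑ k ∈ range (n + 1), c k

lemma cumsum_succ {R : Type*} [AddCommMonoid R] (c : ℕ → R) (n : ℕ) :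
    cumsum c (n + 1) = cumsum c n + c (n + 1) :=
  sum_range_succ c (n + 1)

theorem sum_range_mul_eq_by_parts_twice {R : Type*} [CommRing R] (a c : ℕ → R) (N : ℕ) :
    ∑ k ∈ range (N + 2), a k * c k =
      ∑ m ∈ range N, Δ_[1] (Δ_[1] a) m * cumsum (cumsum c) m
        - Δ_[1] a N * cumsum (cumsum c) N + a (N + 1) * cumsum c (N + 1) := by
  induction N with
  | zero =>
    simp only [zero_add, sum_range_succ, range_one, sum_singleton, range_zero, fwdDiff, cumsum,
      sum_empty, zero_sub, Nat.reduceAdd]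
    ring
  | succ N ih =>
    rw [sum_range_succ, ih, sum_range_succ, cumsum_succ (cumsum c), cumsum_succ c (N + 1)]
    simp only [fwdDiff]
    ring

noncomputable def cosKernel (θ : ℝ) (k : ℕ) : ℝ :=
  if k = 0 then 1 else 2 * Real.cos (k * θ)

noncomputable def expSumNormSq (θ : ℝ) (n : ℕ) : ℝ :=
  (∑ k ∈ range n, Real.cos (k * θ)) ^ 2 + (∑ k ∈ range n, Real.sin (k * θ)) ^ 2

lemma sum_range_cos_sub (θ : ℝ) (n : ℕ) :
    ∑ k ∈ range n, Real.cos ((n - k : ℝ) * θ) =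
      ∑ k ∈ range n, Real.cos ((k + 1 : ℝ) * θ) := by
  rw [← sum_range_reflect]
  refine sum_congr rfl fun k hk => ?_
  have hk : k < n := mem_range.mp hk
  rw [Nat.cast_sub (by omega), Nat.cast_sub (by omega)]
  ring_nf

lemma cumsum_cosKernel (θ : ℝ) (n : ℕ) :
    cumsum (cosKernel θ) n = expSumNormSq θ (n + 1) - expSumNormSq θ n := by
  have hcross : (∑ k ∈ range n, Real.cos (k * θ)) * Real.cos (n * θ)
      + (∑ k ∈ range n, Real.sin (k * θ)) * Real.sin (n * θ)
      = ∑ k ∈ range n, Real.cos ((k + 1 : ℝ) * θ) := by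
    rw [← sum_range_cos_sub, sum_mul, sum_mul, ← sum_add_distrib]
    refine sum_congr rfl fun k _ => ?_
    rw [sub_mul, Real.cos_sub]
    ring
  have hkernel :
      cumsum (cosKernel θ) n = 1 + 2 * ∑ k ∈ range n, Real.cos ((k + 1 : ℝ) * θ) := by
    rw [cumsum, sum_range_succ', mul_sum]
    simp only [cosKernel, Nat.add_eq_zero_iff, one_ne_zero, and_false, ↓reduceIte, Nat.cast_add,
      Nat.cast_one]
    ring
  rw [hkernel, ← hcross, expSumNormSq, expSumNormSq, sum_range_succ, sum_range_succ]
  linear_combination -Real.sin_sq_add_cos_sq ((n : ℝ) * θ)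

lemma cumsum_cumsum_cosKernel (θ : ℝ) (n : ℕ) :
    cumsum (cumsum (cosKernel θ)) n = expSumNormSq θ (n + 1) := by
  rw [cumsum]
  simp only [cumsum_cosKernel, sum_range_sub]
  simp [expSumNormSq]

lemma neg_two_mul_le_cumsum_cosKernel (θ : ℝ) (n : ℕ) :
    -2 * (n + 1) ≤ cumsum (cosKernel θ) n := by
  have h : ∀ k ∈ range (n + 1), -2 ≤ cosKernel θ k := fun k _ => by
    unfold cosKernel
    split_ifs
    · norm_num
    · linarith [Real.neg_one_le_cos (k * θ)]
  have := card_nsmul_le_sum _ _ _ h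
  rw [card_range, nsmul_eq_mul] at this
  push_cast at this
  rw [cumsum]
  linarith

theorem Antitone.tendsto_nat_mul_zero_of_summable {a : ℕ → ℝ} (ha : Antitone a)
    (hs : Summable a) : Tendsto (fun n : ℕ => (n : ℝ) * a n) atTop (𝓝 0) := by
  have ha0 : ∀ n, 0 ≤ a n := ha.le_of_tendsto hs.tendsto_atTop_zero
  -- `(n / 2) a n` is bounded by the block `∑_{n/2 ≤ k < n} a k` of a convergent series.
  have hpartial := hs.hasSum.tendsto_sum_nat
  have hblock : Tendsto (fun n => ∑ k ∈ Ico (n / 2) n, a k) atTop (𝓝 0) := by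
    simp_rw [sum_Ico_eq_sub _ (Nat.div_le_self _ 2)]
    simpa using hpartial.sub (hpartial.comp (Nat.tendsto_div_const_atTop two_ne_zero))
  refine squeeze_zero (fun n => mul_nonneg n.cast_nonneg (ha0 n)) (fun n => ?_)
    (by simpa using hblock.const_mul 2)
  have hcard := card_nsmul_le_sum (Ico (n / 2) n) a (a n)
    fun k hk => ha (mem_Ico.mp hk).2.le
  rw [Nat.card_Ico, nsmul_eq_mul] at hcard
  have hhalf : (n : ℝ) ≤ 2 * ((n - n / 2 : ℕ) : ℝ) := by
    exact_mod_cast (by omega : n ≤ 2 * (n - n / 2))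
  nlinarith [ha0 n]

section ConvexSequence

variable {a : ℕ → ℝ}

lemma fwdDiff_nonpos_of_convex (hs : Summable a) (hconv : ∀ n, 0 ≤ Δ_[1] (Δ_[1] a) n)
    (n : ℕ) : Δ_[1] a n ≤ 0 := by
  have hmono : Monotone (Δ_[1] a) := monotone_nat_of_le_succ fun n => by
    have := hconv n
    simp only [fwdDiff] at this ⊢
    linarith
  have hlim : Tendsto (fun n => a (n + 1) - a n) atTop (𝓝 0) := by
    have h := hs.tendsto_atTop_zero
    simpa using (h.comp (tendsto_add_atTop_nat 1)).sub h
  exact hmono.ge_of_tendsto hlim n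

lemma antitone_of_convex (hs : Summable a) (hconv : ∀ n, 0 ≤ Δ_[1] (Δ_[1] a) n) :
    Antitone a :=
  antitone_nat_of_succ_le fun n => by
    simpa [fwdDiff] using fwdDiff_nonpos_of_convex hs hconv n

end ConvexSequence

theorem nonneg_of_hasSum_mul_cosKernel {a : ℕ → ℝ} (hs : Summable a)
    (hconv : ∀ n, 0 ≤ Δ_[1] (Δ_[1] a) n) {θ T : ℝ}
    (hT : HasSum (fun k => a k * cosKernel θ k) T) : 0 ≤ T := by
  have hanti := antitone_of_convex hs hconv
  have ha0 : ∀ n, 0 ≤ a n := hanti.le_of_tendsto hs.tendsto_atTop_zero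
  have hlower :
      ∀ N : ℕ, -2 * ((N + 2) * a (N + 1)) ≤ ∑ k ∈ range (N + 2), a k * cosKernel θ k := by
    intro N
    rw [sum_range_mul_eq_by_parts_twice]
    have hfejer : ∀ m, 0 ≤ cumsum (cumsum (cosKernel θ)) m := fun m => by
      rw [cumsum_cumsum_cosKernel, expSumNormSq]
      positivity
    have hinner : 0 ≤ ∑ m ∈ range N, Δ_[1] (Δ_[1] a) m * cumsum (cumsum (cosKernel θ)) m :=
      sum_nonneg fun m _ => mul_nonneg (hconv m) (hfejer m)
    have hboundary : Δ_[1] a N * cumsum (cumsum (cosKernel θ)) N ≤ 0 :=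
      mul_nonpos_of_nonpos_of_nonneg (fwdDiff_nonpos_of_convex hs hconv N) (hfejer N)
    have hdirichlet :=
      mul_le_mul_of_nonneg_left (neg_two_mul_le_cumsum_cosKernel θ (N + 1)) (ha0 (N + 1))
    push_cast at hdirichlet
    linarith
  have hlim : Tendsto (fun N : ℕ => -2 * ((N + 2) * a (N + 1))) atTop (𝓝 0) := by
    have hmul := (hanti.tendsto_nat_mul_zero_of_summable hs).comp (tendsto_add_atTop_nat 1)
    have hshift := hs.tendsto_atTop_zero.comp (tendsto_add_atTop_nat 1)
    have h := (hmul.add hshift).const_mul (-2)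
    rw [add_zero, mul_zero] at h
    refine h.congr fun N => ?_
    simp only [Function.comp_apply]
    push_cast
    ring
  exact le_of_tendsto_of_tendsto' hlim (hT.tendsto_sum_nat.comp (tendsto_add_atTop_nat 2)) hlower

theorem stmt_1_general (f : ℤ → ℝ)
    (heven : ∀ z : ℤ, f (-z) = f z)
    (hsum : Summable fun z : ℤ => |f z|)
    (hconv : ∀ z : ℤ, 1 ≤ z → 0 ≤ f (z + 1) - 2 * f z + f (z - 1))
    (θ : ℝ) :
    0 ≤ ∑' z : ℤ, f z * Real.cos ((z : ℝ) * θ) := by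
  have hsumNat : Summable fun n : ℕ => f n := (hsum.comp_injective Nat.cast_injective).of_abs
  have hconvNat : ∀ n : ℕ, 0 ≤ Δ_[1] (Δ_[1] fun n : ℕ => f n) n := fun n => by
    have := hconv (n + 1) (by omega)
    simp only [fwdDiff, add_sub_cancel_right] at this ⊢
    push_cast
    linarith [show (n : ℤ) + 1 + 1 = n + 2 by ring]
  have hsumInt : Summable fun z : ℤ => f z * Real.cos (z * θ) :=
    hsum.of_norm_bounded fun z => by
      simpa [abs_mul] using mul_le_of_le_one_right (abs_nonneg (f z)) (Real.abs_cos_le_one (z * θ))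
  refine nonneg_of_hasSum_mul_cosKernel hsumNat hconvNat (θ := θ) ?_
  have h := hsumInt.hasSum.nat_add_neg.sub (hasSum_ite_eq 0 (f 0))
  rw [Int.cast_zero, zero_mul, Real.cos_zero, mul_one, add_sub_cancel_right] at h
  refine h.congr_fun fun n => ?_
  rw [heven, Int.cast_neg, neg_mul, Real.cos_neg, cosKernel]
  split_ifs with hn
  · simp [hn]
  · push_cast
    ring

/-- If `f : ℤ → ℝ` is even, nonnegative, summable, and discretely convex on the
positive integers, then its Fourier transform `∑ f(z) cos (zθ)` is nonnegative. -/
theorem stmt_1 (f : ℤ → ℝ)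
    (heven : ∀ z : ℤ, f (-z) = f z)
    (hnonneg : ∀ z : ℤ, 0 ≤ f z)
    (hsum : Summable fun z : ℤ => |f z|)
    (hconv : ∀ z : ℤ, 1 ≤ z → 0 ≤ f (z + 1) - 2 * f z + f (z - 1))
    (θ : ℝ) :
    0 ≤ ∑' z : ℤ, f z * Real.cos ((z : ℝ) * θ) :=
  stmt_1_general f heven hsum hconv θ
end

section
/- Let 0 < γ < 1, a > 0, b ≥ 0 with a(1−γ²) ≥ 2bγ, and define f(z) = (a + b|z|)γ^{|z|} for z ∈ ℤ. Then ∑_{z∈ℤ} f(z) e^{izθ} ≥ 0 for all θ ∈ ℝ. -/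
/-!
With `w = γ e^{iθ}` the series splits into `S(w) = ∑_{n ≥ 0} (a + bn) wⁿ = a/(1-w) + bw/(1-w)²`
and its complex conjugate, so it equals `S + S̄ - a`. Clearing the denominator `|1-w|⁴` leaves a
numerator that is affine in `c = cos θ`; at `c = ±1` it equals `(1 ∓ γ)²(a(1-γ²) ± 2bγ)`, which is
nonnegative exactly under the hypothesis `2bγ ≤ a(1-γ²)`.
-/

open ComplexConjugate

theorem hasSum_linear_mul_geometric {𝕜 : Type*} [NormedField 𝕜] [CompleteSpace 𝕜]
    (a b : 𝕜) {w : 𝕜} (hw : ‖w‖ < 1) :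
    HasSum (fun n : ℕ ↦ (a + b * n) * w ^ n) (a / (1 - w) + b * (w / (1 - w) ^ 2)) := by
  simpa only [div_eq_mul_inv, add_mul, mul_assoc] using
    ((hasSum_geometric_of_norm_lt_one hw).mul_left a).add
      ((hasSum_coe_mul_geometric_of_norm_lt_one hw).mul_left b)

theorem linear_geometric_sum_add_conj_sub (a b : ℝ) {w : ℂ}
    (hw : 1 - 2 * w.re + Complex.normSq w ≠ 0) :
    let S : ℂ := a / (1 - w) + b * (w / (1 - w) ^ 2)
    S + conj S - a = ((a * (1 - Complex.normSq w) * (1 - 2 * w.re + Complex.normSq w)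
      + 2 * b * (w.re * (1 + Complex.normSq w) - 2 * Complex.normSq w))
        / (1 - 2 * w.re + Complex.normSq w) ^ 2 : ℝ) := by
  intro S
  have hre : (w.re : ℂ) = (w + conj w) / 2 := Complex.re_eq_add_conj w
  have hn : (Complex.normSq w : ℂ) = w * conj w := (Complex.mul_conj w).symm
  have hD : ((1 - 2 * w.re + Complex.normSq w : ℝ) : ℂ) = (1 - w) * (1 - conj w) := by
    push_cast; rw [hre, hn]; ring
  obtain ⟨h1, h2⟩ := mul_ne_zero_iff.mp (hD ▸ Complex.ofReal_ne_zero.mpr hw)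
  simp only [S, map_add, map_mul, map_div₀, map_pow, map_sub, map_one, Complex.conj_ofReal]
  rw [Complex.ofReal_div, Complex.ofReal_pow, hD]
  push_cast
  rw [hre, hn]
  field_simp
  ring

theorem fourier_numerator_nonneg {γ a b c : ℝ} (hγ : 0 ≤ γ) (hb : 0 ≤ b)
    (hab : 2 * b * γ ≤ a * (1 - γ ^ 2)) (hc₁ : -1 ≤ c) (hc₂ : c ≤ 1) :
    0 ≤ a * (1 - γ ^ 2) * (1 - 2 * (γ * c) + γ ^ 2)
      + 2 * b * (γ * c * (1 + γ ^ 2) - 2 * γ ^ 2) := by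
  have hN : a * (1 - γ ^ 2) * (1 - 2 * (γ * c) + γ ^ 2)
      + 2 * b * (γ * c * (1 + γ ^ 2) - 2 * γ ^ 2)
      = (1 + c) / 2 * ((1 - γ) ^ 2 * (a * (1 - γ ^ 2) + 2 * b * γ))
        + (1 - c) / 2 * ((1 + γ) ^ 2 * (a * (1 - γ ^ 2) - 2 * b * γ)) := by ring
  have hplus : 0 ≤ a * (1 - γ ^ 2) + 2 * b * γ := by linarith [mul_nonneg hb hγ]
  have hminus : 0 ≤ a * (1 - γ ^ 2) - 2 * b * γ := by linarith
  rw [hN]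
  have hc_add : 0 ≤ 1 + c := by linarith
  have hc_sub : 0 ≤ 1 - c := by linarith
  positivity

theorem hasSum_int_fourier_linear_mul_pow_natAbs (a b θ : ℝ) {γ : ℝ} (hγ : |γ| < 1) :
    let w : ℂ := γ * Complex.exp (θ * Complex.I)
    let S : ℂ := a / (1 - w) + b * (w / (1 - w) ^ 2)
    HasSum (fun z : ℤ ↦ (((a + b * |(z : ℝ)|) * γ ^ z.natAbs : ℝ) : ℂ)
        * Complex.exp ((z : ℂ) * θ * Complex.I)) (S + conj S - a) := by
  intro w S
  set f : ℤ → ℂ := fun z ↦ (((a + b * |(z : ℝ)|) * γ ^ z.natAbs : ℝ) : ℂ)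
        * Complex.exp ((z : ℂ) * θ * Complex.I)
  have hw : ‖w‖ < 1 := by simpa [w] using hγ
  have hf_nat : ∀ n : ℕ, f n = (a + b * n) * w ^ n := by
    intro n
    simp only [f, w, Int.natAbs_natCast, Int.cast_natCast, Nat.abs_cast, mul_pow,
      ← Complex.exp_nat_mul]
    push_cast
    ring_nf
  have hf_neg : ∀ z : ℤ, f (-z) = conj (f z) := by
    intro z
    simp only [f, map_mul, Complex.conj_ofReal, ← Complex.exp_conj]
    push_cast
    simp
  have hnat : HasSum (fun n : ℕ ↦ f n) S := by
    simpa only [hf_nat] using hasSum_linear_mul_geometric (a : ℂ) b hw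
  have hneg : HasSum (fun n : ℕ ↦ f (-n)) (conj S) := by
    simpa only [hf_neg] using Complex.hasSum_conj'.mpr hnat
  simpa [f] using hnat.of_nat_of_neg hneg

open ComplexOrder in
theorem stmt_3_general (γ a b : ℝ) (hγ0 : 0 < γ) (hγ1 : γ < 1) (hb : 0 ≤ b)
    (hab : 2 * b * γ ≤ a * (1 - γ ^ 2)) (θ : ℝ) :
    0 ≤ ∑' z : ℤ, (((a + b * |(z : ℝ)|) * γ ^ z.natAbs : ℝ) : ℂ)
        * Complex.exp ((z : ℂ) * θ * Complex.I) := by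
  set w : ℂ := γ * Complex.exp (θ * Complex.I)
  have hw_re : w.re = γ * Real.cos θ := by simp [w, Complex.exp_ofReal_mul_I_re]
  have hw_normSq : Complex.normSq w = γ ^ 2 := by simp [w, Complex.normSq_eq_norm_sq]
  have hD : 1 - 2 * w.re + Complex.normSq w ≠ 0 := by
    rw [hw_re, hw_normSq]; nlinarith [Real.cos_le_one θ]
  rw [(hasSum_int_fourier_linear_mul_pow_natAbs a b θ (abs_lt.mpr ⟨by linarith, hγ1⟩)).tsum_eq,
    linear_geometric_sum_add_conj_sub a b hD, hw_re, hw_normSq, Complex.zero_le_real]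
  exact div_nonneg
    (fourier_numerator_nonneg hγ0.le hb hab (Real.neg_one_le_cos θ) (Real.cos_le_one θ))
    (sq_nonneg _)

open ComplexOrder in
/-- Nonnegativity of the Fourier transform of `f(z) = (a + b|z|) γ^{|z|}`
when `a(1-γ²) ≥ 2bγ` (nonnegativity in the partial order on `ℂ`,
the sum being real). -/
theorem stmt_3 (γ a b : ℝ) (hγ0 : 0 < γ) (hγ1 : γ < 1) (ha : 0 < a) (hb : 0 ≤ b)
    (hab : 2 * b * γ ≤ a * (1 - γ ^ 2)) (θ : ℝ) :
    0 ≤ ∑' z : ℤ, (((a + b * |(z : ℝ)|) * γ ^ z.natAbs : ℝ) : ℂ)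
        * Complex.exp ((z : ℂ) * θ * Complex.I) :=
  stmt_3_general γ a b hγ0 hγ1 hb hab θ
end
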